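/- Let F be a functionality over S, O, R, let s be a state, let μ and γ be lists of operations, let o be an operation, and set a = execState F s μ and r = (F a o).2. Suppose the list [o] commutes with γ in state a, in the sense that execState F a ([o] ++ γ) = execState F a (γ ++ [o]) and there is a list of responses w with respSeq F a ([o] ++ γ) = r :: w and respSeq F a (γ ++ [o]) = w ++ [r]. Then respSeq F s (μ ++ γ ++ [o]) = respSeq F s μ ++ w ++ [r] and execState F s (μ ++ γ ++ [o]) = execState F a ([o] ++ γ); in particular, the last response in the execution of μ ++ γ ++ [o] from s equals r, the response of o computed directly in state a. -/
import Mathlib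


/-- Final state of executing a list of operations in order from `s`. -/
def execState {S O R : Type*} (F : S → O → S × R) : S → List O → S
  | s, [] => s
  | s, o :: ρ => execState F (F s o).1 ρ

/-- List of responses produced in order by executing a list of operations from `s`. -/
def respSeq {S O R : Type*} (F : S → O → S × R) : S → List O → List R
  | _, [] => []
  | s, o :: ρ => (F s o).2 :: respSeq F (F s o).1 ρ

/-- Operations `o1` and `o2` commute in state `s` w.r.t. functionality `F`:
with `(s', r1) = F s o1`, `(s'', r2) = F s' o2`, `(t', q2) = F s o2`,
`(t'', q1) = F t' o1`, we require `r1 = q1`, `r2 = q2`, `s'' = t''`. -/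
def commuteIn {S O R : Type*} (F : S → O → S × R) (s : S) (o1 o2 : O) : Prop :=
  (F s o1).2 = (F (F s o2).1 o1).2 ∧
  (F (F s o1).1 o2).2 = (F s o2).2 ∧
  (F (F s o1).1 o2).1 = (F (F s o2).1 o1).1


theorem execState_append {S O R : Type*} (F : S → O → S × R) (s : S) (ρ σ : List O) :
    execState F s (ρ ++ σ) = execState F (execState F s ρ) σ := by
  induction ρ generalizing s with
  | nil => rfl
  | cons o ρ ih => simp [execState, ih]

theorem respSeq_append {S O R : Type*} (F : S → O → S × R) (s : S) (ρ σ : List O) :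
    respSeq F s (ρ ++ σ) = respSeq F s ρ ++ respSeq F (execState F s ρ) σ := by
  induction ρ generalizing s with
  | nil => rfl
  | cons o ρ ih => simp [respSeq, execState, ih]

theorem pending_self_then_commuting (S O R : Type*) (F : S → O → S × R)
    (s : S) (μ γ : List O) (o : O) (a : S) (r : R)
    (ha : a = execState F s μ) (hr : r = (F a o).2)
    (hstate : execState F a ([o] ++ γ) = execState F a (γ ++ [o]))
    (w : List R)
    (hw1 : respSeq F a ([o] ++ γ) = r :: w)
    (hw2 : respSeq F a (γ ++ [o]) = w ++ [r]) :
    respSeq F s (μ ++ γ ++ [o]) = respSeq F s μ ++ w ++ [r] ∧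
    execState F s (μ ++ γ ++ [o]) = execState F a ([o] ++ γ) := by
  constructor
  · rw [List.append_assoc, respSeq_append, ← ha, hw2, List.append_assoc]
  · rw [List.append_assoc, execState_append, ← ha, hstate]
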